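/- Let n ≥ 2 and let ∇ = ∇⁰ + Γ be a symplectic connection on (ℝ^{2n},Ω) of Ricci type, and let u be a smooth 1-form with (∇_X r)(x)(Y,Z) = (1/(2n+1))·(Ω(X,Y)u(x)(Z) + Ω(X,Z)u(x)(Y)) for all x,X,Y,Z. Then ∇ is locally symmetric, i.e. (∇_X R)(x)(Y,Z) = 0 for all x,X,Y,Z, if and only if u vanishes identically. -/

import Mathlib

/-!
Each `Γ(x)(X)` lies in `sp(V, Ω)` (this is the total symmetry of `Ω(Γ(x)(X)Y, Z)`), so
differentiating the Ricci-type identity covariantly shows that `Ω((∇_X R)(Y,Z)W, T)` is given by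
the same expression with `r` replaced by `∇_X r`; conversely `∇_X r` is the trace defining the
Ricci tensor applied to `∇_X R`. Hence `∇R = 0` iff `∇r = 0`. Finally, for `Y = Z = v` the
hypothesis on `u` reads `(∇_X r)(v,v) = 2/(2n+1) · Ω(X,v) u(v)`, and by nondegeneracy of `Ω`
this vanishes for all `X, v` iff `u = 0`.
-/

noncomputable section

/-- The standard symplectic form on `ℝ^{2n}`. -/
def Omega (n : ℕ) (x y : Fin (2*n) → ℝ) : ℝ :=
  ∑ i : Fin n, (x ⟨i.1, by have := i.isLt; omega⟩ * y ⟨n + i.1, by have := i.isLt; omega⟩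
    - x ⟨n + i.1, by have := i.isLt; omega⟩ * y ⟨i.1, by have := i.isLt; omega⟩)

/-- The curvature of `∇ = ∇⁰ + Γ`. -/
def curv (n : ℕ) (Γ : (Fin (2*n) → ℝ) → (Fin (2*n) → ℝ) →L[ℝ] (Fin (2*n) → ℝ) →L[ℝ] (Fin (2*n) → ℝ))
    (x X Y : Fin (2*n) → ℝ) : (Fin (2*n) → ℝ) →L[ℝ] (Fin (2*n) → ℝ) :=
  fderiv ℝ Γ x X Y - fderiv ℝ Γ x Y X + (Γ x X).comp (Γ x Y) - (Γ x Y).comp (Γ x X)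

/-- The Ricci tensor `r(x)(X,Y) = Tr(Z ↦ R(x)(X,Z)Y)`. -/
def ricci (n : ℕ) (Γ : (Fin (2*n) → ℝ) → (Fin (2*n) → ℝ) →L[ℝ] (Fin (2*n) → ℝ) →L[ℝ] (Fin (2*n) → ℝ))
    (x X Y : Fin (2*n) → ℝ) : ℝ :=
  ∑ a : Fin (2*n), curv n Γ x X (Pi.single a 1) Y a

/-- `∇` is of Ricci type. -/
def IsRicciType (n : ℕ)
    (Γ : (Fin (2*n) → ℝ) → (Fin (2*n) → ℝ) →L[ℝ] (Fin (2*n) → ℝ) →L[ℝ] (Fin (2*n) → ℝ)) : Prop :=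
  ∀ x X Y Z T, Omega n (curv n Γ x X Y Z) T =
    -(1/(2*((n:ℝ)+1))) * (2 * Omega n X Y * ricci n Γ x Z T
      + Omega n X Z * ricci n Γ x Y T + Omega n X T * ricci n Γ x Y Z
      - Omega n Y Z * ricci n Γ x X T - Omega n Y T * ricci n Γ x X Z)

/-- The covariant derivative of the Ricci tensor. -/
def nablaRicci (n : ℕ)
    (Γ : (Fin (2*n) → ℝ) → (Fin (2*n) → ℝ) →L[ℝ] (Fin (2*n) → ℝ) →L[ℝ] (Fin (2*n) → ℝ))
    (x X Y Z : Fin (2*n) → ℝ) : ℝ :=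
  fderiv ℝ (fun p => ricci n Γ p Y Z) x X - ricci n Γ x (Γ x X Y) Z - ricci n Γ x Y (Γ x X Z)

/-- The covariant derivative of the curvature, as an `End(V)`-valued expression:
`(∇_X R)(x)(Y,Z) = D_X(R(·)(Y,Z))(x) + Γ(x)(X)∘R(x)(Y,Z) − R(x)(Y,Z)∘Γ(x)(X)
− R(x)(Γ(x)(X)Y,Z) − R(x)(Y,Γ(x)(X)Z)`. -/
def nablaCurv (n : ℕ)
    (Γ : (Fin (2*n) → ℝ) → (Fin (2*n) → ℝ) →L[ℝ] (Fin (2*n) → ℝ) →L[ℝ] (Fin (2*n) → ℝ))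
    (x X Y Z : Fin (2*n) → ℝ) : (Fin (2*n) → ℝ) →L[ℝ] (Fin (2*n) → ℝ) :=
  fderiv ℝ (fun p => curv n Γ p Y Z) x X
    + (Γ x X).comp (curv n Γ x Y Z) - (curv n Γ x Y Z).comp (Γ x X)
    - curv n Γ x (Γ x X Y) Z - curv n Γ x Y (Γ x X Z)

theorem LinearMap.sum_single_apply_eq_trace {ι R : Type*} [Fintype ι] [DecidableEq ι] [CommRing R]
    (f : (ι → R) →ₗ[R] (ι → R)) : ∑ a, f (Pi.single a 1) a = LinearMap.trace R (ι → R) f := by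
  rw [LinearMap.trace_eq_matrix_trace R (Pi.basisFun R ι), LinearMap.toMatrix_eq_toMatrix',
    Matrix.trace]
  simp [LinearMap.toMatrix'_apply]

theorem differentiable_fderiv_of_contDiff {E F : Type*} [NormedAddCommGroup E] [NormedSpace ℝ E]
    [NormedAddCommGroup F] [NormedSpace ℝ F] {f : E → F} (hf : ContDiff ℝ (⊤ : ℕ∞) f) :
    Differentiable ℝ (fderiv ℝ f) :=
  (hf.fderiv_right (m := (⊤ : ℕ∞)) (by simp)).differentiable (by simp)

theorem fderiv_continuousLinearMap_comp_apply {E F G : Type*} [NormedAddCommGroup E]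
    [NormedSpace ℝ E] [NormedAddCommGroup F] [NormedSpace ℝ F] [NormedAddCommGroup G]
    [NormedSpace ℝ G] (L : F →L[ℝ] G) {f : E → F} {x : E} (hf : DifferentiableAt ℝ f x) (X : E) :
    fderiv ℝ (fun p => L (f p)) x X = L (fderiv ℝ f x X) :=
  congrArg (· X) (L.hasFDerivAt.comp x hf.hasFDerivAt).fderiv

namespace SymplecticConnection

variable {n : ℕ}

theorem Omega_add_left (x x' y : Fin (2*n) → ℝ) :
    Omega n (x + x') y = Omega n x y + Omega n x' y := by
  unfold Omega
  rw [← Finset.sum_add_distrib]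
  exact Finset.sum_congr rfl fun i _ => by simp only [Pi.add_apply]; ring

theorem Omega_smul_left (c : ℝ) (x y : Fin (2*n) → ℝ) :
    Omega n (c • x) y = c * Omega n x y := by
  unfold Omega
  rw [Finset.mul_sum]
  exact Finset.sum_congr rfl fun i _ => by simp only [Pi.smul_apply, smul_eq_mul]; ring

theorem Omega_swap (x y : Fin (2*n) → ℝ) : Omega n x y = -Omega n y x := by
  unfold Omega
  rw [← Finset.sum_neg_distrib]
  exact Finset.sum_congr rfl fun i _ => by ring

def omegaLeft (n : ℕ) (y : Fin (2*n) → ℝ) : (Fin (2*n) → ℝ) →L[ℝ] ℝ :=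
  LinearMap.toContinuousLinearMap
    { toFun := fun x => Omega n x y
      map_add' := fun x x' => Omega_add_left x x' y
      map_smul' := fun c x => Omega_smul_left c x y }

@[simp] theorem omegaLeft_apply (x y : Fin (2*n) → ℝ) : omegaLeft n y x = Omega n x y := rfl

theorem Omega_sub_left (x x' y : Fin (2*n) → ℝ) :
    Omega n (x - x') y = Omega n x y - Omega n x' y :=
  (omegaLeft n y).map_sub x x'

theorem single_apply_mk {m j k : ℕ} (hj : j < m) (hk : k < m) :
    (Pi.single (⟨j, hj⟩ : Fin m) 1 : Fin m → ℝ) ⟨k, hk⟩ = if k = j then 1 else 0 := by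
  simp [Pi.single_apply, Fin.ext_iff]

theorem Omega_single_right_add (v : Fin (2*n) → ℝ) (i : Fin n) :
    Omega n v (Pi.single (⟨n + i.1, by omega⟩ : Fin (2*n)) 1) = v ⟨i.1, by omega⟩ := by
  unfold Omega
  rw [Finset.sum_eq_single i]
  · rw [single_apply_mk, single_apply_mk, if_pos rfl, if_neg (by omega)]; ring
  · intro b _ hb
    rw [single_apply_mk, single_apply_mk, if_neg (by omega),
      if_neg (fun h => hb (Fin.ext (by omega)))]; ring
  · simp

theorem Omega_single_right (v : Fin (2*n) → ℝ) (i : Fin n) :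
    Omega n v (Pi.single (⟨i.1, by omega⟩ : Fin (2*n)) 1) = -v ⟨n + i.1, by omega⟩ := by
  unfold Omega
  rw [Finset.sum_eq_single i]
  · rw [single_apply_mk, single_apply_mk, if_pos rfl, if_neg (by omega)]; ring
  · intro b _ hb
    rw [single_apply_mk, single_apply_mk, if_neg (by omega),
      if_neg (fun h => hb (Fin.ext (by omega)))]; ring
  · simp

theorem eq_zero_of_Omega_eq_zero {v : Fin (2*n) → ℝ} (h : ∀ T, Omega n v T = 0) : v = 0 := by
  funext a
  rcases lt_or_ge a.1 n with ha | ha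
  · simpa [Omega_single_right_add v ⟨a.1, ha⟩] using h (Pi.single ⟨n + a.1, by omega⟩ 1)
  · have hT := h (Pi.single ⟨a.1 - n, by omega⟩ 1)
    rw [Omega_single_right v ⟨a.1 - n, by omega⟩, neg_eq_zero] at hT
    simpa [show n + (a.1 - n) = a.1 by omega] using hT

variable {Γ : (Fin (2*n) → ℝ) → (Fin (2*n) → ℝ) →L[ℝ] (Fin (2*n) → ℝ) →L[ℝ] (Fin (2*n) → ℝ)}

def curvMid (Γ : (Fin (2*n) → ℝ) → (Fin (2*n) → ℝ) →L[ℝ] (Fin (2*n) → ℝ) →L[ℝ] (Fin (2*n) → ℝ))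
    (x Y Z : Fin (2*n) → ℝ) : (Fin (2*n) → ℝ) →ₗ[ℝ] (Fin (2*n) → ℝ) where
  toFun W := curv n Γ x Y W Z
  map_add' W W' := by simp only [curv, map_add]; simp; abel
  map_smul' c W := by simp [curv, smul_sub]

theorem differentiable_curv (hΓ : ContDiff ℝ (⊤ : ℕ∞) Γ) (Y Z : Fin (2*n) → ℝ) :
    Differentiable ℝ (fun p => curv n Γ p Y Z) := by
  have := hΓ.differentiable (by simp)
  have := differentiable_fderiv_of_contDiff hΓ
  unfold curv
  fun_prop

theorem differentiable_ricci (hΓ : ContDiff ℝ (⊤ : ℕ∞) Γ) (Y Z : Fin (2*n) → ℝ) :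
    Differentiable ℝ (fun p => ricci n Γ p Y Z) := by
  have := differentiable_curv hΓ
  unfold ricci
  fun_prop

theorem fderiv_ricci_apply (hΓ : ContDiff ℝ (⊤ : ℕ∞) Γ) (x X Y Z : Fin (2*n) → ℝ) :
    fderiv ℝ (fun p => ricci n Γ p Y Z) x X
      = ∑ a : Fin (2*n), fderiv ℝ (fun p => curv n Γ p Y (Pi.single a 1)) x X Z a := by
  have := differentiable_curv hΓ
  unfold ricci
  rw [fderiv_fun_sum (fun a _ => by fun_prop), _root_.sum_apply]
  exact Finset.sum_congr rfl fun a _ => fderiv_continuousLinearMap_comp_apply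
    ((ContinuousLinearMap.proj (R := ℝ) (φ := fun _ : Fin (2*n) => ℝ) a).comp
      (ContinuousLinearMap.apply ℝ _ Z)) (this Y (Pi.single a 1) x) X

theorem fderiv_Omega_curv_apply (hΓ : ContDiff ℝ (⊤ : ℕ∞) Γ) (x X Y Z W T : Fin (2*n) → ℝ) :
    fderiv ℝ (fun p => Omega n (curv n Γ p Y Z W) T) x X
      = Omega n (fderiv ℝ (fun p => curv n Γ p Y Z) x X W) T :=
  fderiv_continuousLinearMap_comp_apply
    ((omegaLeft n T).comp (ContinuousLinearMap.apply ℝ _ W)) (differentiable_curv hΓ Y Z x) X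

theorem nablaRicci_eq_sum_nablaCurv (hΓ : ContDiff ℝ (⊤ : ℕ∞) Γ) (x X Y Z : Fin (2*n) → ℝ) :
    nablaRicci n Γ x X Y Z = ∑ a : Fin (2*n), nablaCurv n Γ x X Y (Pi.single a 1) Z a := by
  have htrace : ∑ a : Fin (2*n), Γ x X (curv n Γ x Y (Pi.single a 1) Z) a
      = ∑ a : Fin (2*n), curv n Γ x Y (Γ x X (Pi.single a 1)) Z a := by
    have := LinearMap.trace_mul_comm ℝ (Γ x X).toLinearMap (curvMid Γ x Y Z)
    rwa [← LinearMap.sum_single_apply_eq_trace, ← LinearMap.sum_single_apply_eq_trace] at this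
  simp only [nablaRicci, nablaCurv, add_apply, sub_apply,
    ContinuousLinearMap.comp_apply, Pi.add_apply, Pi.sub_apply, Finset.sum_add_distrib,
    Finset.sum_sub_distrib, fderiv_ricci_apply hΓ, htrace]
  simp only [ricci]
  ring

theorem Omega_fderiv_curv_of_isRicciType (hΓ : ContDiff ℝ (⊤ : ℕ∞) Γ) (hR : IsRicciType n Γ)
    (x X Y Z W T : Fin (2*n) → ℝ) :
    Omega n (fderiv ℝ (fun p => curv n Γ p Y Z) x X W) T =
      -(1/(2*((n:ℝ)+1))) * (2 * Omega n Y Z * fderiv ℝ (fun p => ricci n Γ p W T) x X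
        + Omega n Y W * fderiv ℝ (fun p => ricci n Γ p Z T) x X
        + Omega n Y T * fderiv ℝ (fun p => ricci n Γ p Z W) x X
        - Omega n Z W * fderiv ℝ (fun p => ricci n Γ p Y T) x X
        - Omega n Z T * fderiv ℝ (fun p => ricci n Γ p Y W) x X) := by
  have := differentiable_ricci hΓ
  rw [← fderiv_Omega_curv_apply hΓ, funext fun p => hR p Y Z W T]
  simp (disch := fun_prop) only [fderiv_fun_sub, fderiv_fun_add, fderiv_const_mul]
  simp

theorem Omega_nablaCurv_of_isRicciType (hΓ : ContDiff ℝ (⊤ : ℕ∞) Γ) (hR : IsRicciType n Γ)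
    {x X : Fin (2*n) → ℝ} (hsp : ∀ A B, Omega n (Γ x X A) B = -Omega n A (Γ x X B))
    (Y Z W T : Fin (2*n) → ℝ) :
    Omega n (nablaCurv n Γ x X Y Z W) T =
      -(1/(2*((n:ℝ)+1))) * (2 * Omega n Y Z * nablaRicci n Γ x X W T
        + Omega n Y W * nablaRicci n Γ x X Z T + Omega n Y T * nablaRicci n Γ x X Z W
        - Omega n Z W * nablaRicci n Γ x X Y T - Omega n Z T * nablaRicci n Γ x X Y W) := by
  simp only [nablaCurv, add_apply, sub_apply,
    ContinuousLinearMap.comp_apply, Omega_sub_left, Omega_add_left]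
  rw [Omega_fderiv_curv_of_isRicciType hΓ hR, hsp, hR x Y Z W (Γ x X T), hR x Y Z (Γ x X W) T,
    hR x (Γ x X Y) Z W T, hR x Y (Γ x X Z) W T]
  unfold nablaRicci
  linear_combination (1/(2*((n:ℝ)+1))) * (2 * ricci n Γ x W T * hsp Y Z
    + ricci n Γ x Z T * hsp Y W + ricci n Γ x Z W * hsp Y T
    - ricci n Γ x Y T * hsp Z W - ricci n Γ x Y W * hsp Z T)

theorem eq_zero_of_Omega_mul_eq_zero (u : (Fin (2*n) → ℝ) →L[ℝ] ℝ)
    (h : ∀ X v, Omega n X v * u v = 0) : u = 0 := by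
  ext v
  by_contra huv
  have hv : v = 0 := eq_zero_of_Omega_eq_zero fun T => by
    rw [Omega_swap, neg_eq_zero]
    exact (mul_eq_zero.mp (h T v)).resolve_right huv
  exact huv (by simp [hv])

end SymplecticConnection

open SymplecticConnection

theorem locally_symmetric_iff_u_zero (n : ℕ)
    (Γ : (Fin (2*n) → ℝ) → (Fin (2*n) → ℝ) →L[ℝ] (Fin (2*n) → ℝ) →L[ℝ] (Fin (2*n) → ℝ))
    (hΓ : ContDiff ℝ (⊤ : ℕ∞) Γ)
    (hsym₂ : ∀ x X Y Z, Omega n (Γ x X Y) Z = Omega n (Γ x X Z) Y)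
    (hR : IsRicciType n Γ)
    (u : (Fin (2*n) → ℝ) → ((Fin (2*n) → ℝ) →L[ℝ] ℝ))
    (hur : ∀ x X Y Z, nablaRicci n Γ x X Y Z =
      (1/(2*(n:ℝ)+1)) * (Omega n X Y * u x Z + Omega n X Z * u x Y)) :
    (∀ x X Y Z, nablaCurv n Γ x X Y Z = 0) ↔ (∀ x, u x = 0) := by
  constructor
  · intro hsymm x
    refine eq_zero_of_Omega_mul_eq_zero (u x) fun X v => ?_
    have h := hur x X v v
    simp only [nablaRicci_eq_sum_nablaCurv hΓ, hsymm, zero_apply, Pi.zero_apply,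
      Finset.sum_const_zero] at h
    field_simp at h
    linarith
  · intro hu x X Y Z
    ext W : 1
    refine eq_zero_of_Omega_eq_zero fun T => ?_
    rw [Omega_nablaCurv_of_isRicciType hΓ hR fun A B => by rw [hsym₂, Omega_swap]]
    simp [hur, hu]
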